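/- Let K be a field of characteristic p > 3 and f = x^3 + y^4 + y z^2 + a x y^3 ∈ K[[x,y,z]] for any a ∈ K. Then μ(f) = 10. -/

import Mathlib

open MvPowerSeries

noncomputable def pd {n : ℕ} {K : Type} [Field K] (i : Fin n)
    (f : MvPowerSeries (Fin n) K) : MvPowerSeries (Fin n) K :=
  fun m => ((m i + 1 : ℕ) : K) * MvPowerSeries.coeff (R := K) (m + Finsupp.single i 1) f

/-- The Milnor number: dimension of the quotient by the Jacobian ideal. -/
noncomputable def milnor {n : ℕ} (K : Type) [Field K] (f : MvPowerSeries (Fin n) K) : ℕ :=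
  Module.finrank K (MvPowerSeries (Fin n) K ⧸ Ideal.span (Set.range fun i => pd i f))

/-!
The Jacobian ideal is `J = (3x² + ay³, 4y³ + 3axy² + z², 2yz)`. It contains every monomial of
degree 5, so every power series is congruent modulo `J` to a polynomial of degree at most 4, and
reducing the 35 monomials of degree at most 4 shows that `1, x, y, z, xy, y², xz, y³, xy², xy³`
span `K⟦x,y,z⟧ ⧸ J`. Conversely, ten linear functionals reading off coefficients of degree at
most 4 vanish on `J` and are dual to these ten monomials, so they stay independent modulo `J`.
-/

theorem pd_eq_pderiv {n : ℕ} {K : Type} [Field K] (i : Fin n) (f : MvPowerSeries (Fin n) K) :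
    pd i f = pderiv K i f := by
  ext m
  rw [coeff_pderiv, mul_comm]
  change ((m i + 1 : ℕ) : K) * _ = _
  push_cast
  rfl

noncomputable def jacobianIdeal {n : ℕ} {K : Type} [Field K] (f : MvPowerSeries (Fin n) K) :
    Ideal (MvPowerSeries (Fin n) K) :=
  Ideal.span (Set.range fun i => pd i f)

theorem Submodule.mem_of_algebraMap_mul_mem {K A : Type*} [Field K] [Ring A] [Algebra K A]
    (S : Submodule K A) {c : K} (hc : c ≠ 0) {f : A} (h : algebraMap K A c * f ∈ S) : f ∈ S :=
  (S.smul_mem_iff hc).mp (by rwa [Algebra.smul_def])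

theorem Ideal.mem_of_algebraMap_mul_mem {K A : Type*} [Field K] [CommRing A] [Algebra K A]
    (I : Ideal A) {c : K} (hc : c ≠ 0) {f : A} (h : algebraMap K A c * f ∈ I) : f ∈ I :=
  (I.restrictScalars K).mem_of_algebraMap_mul_mem hc h

theorem MvPowerSeries.mem_ideal_of_coeff_eq_zero {σ R : Type*} [CommSemiring R] [Finite σ]
    {I : Ideal (MvPowerSeries σ R)} {k : ℕ}
    (hI : ∀ e : σ →₀ ℕ, e.degree = k → monomial e (1 : R) ∈ I)
    {g : MvPowerSeries σ R} (hg : ∀ d : σ →₀ ℕ, d.degree < k → coeff d g = 0) : g ∈ I := by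
  classical
  -- Assign to each exponent `d` of degree `≥ k` a divisor `c d` of degree `k`, and split `g`
  -- accordingly as `∑ X^e * q e`.
  let c : (σ →₀ ℕ) → (σ →₀ ℕ) := fun d =>
    if h : k ≤ d.degree then (Finsupp.exists_le_degree_eq d k h).choose else d
  have hc : ∀ d, k ≤ d.degree → c d ≤ d ∧ (c d).degree = k := fun d h => by
    simp only [c, dif_pos h]; exact (Finsupp.exists_le_degree_eq d k h).choose_spec
  let S := (Finsupp.finite_of_degree_eq (σ := σ) k).toFinset
  let q : (σ →₀ ℕ) → MvPowerSeries σ R := fun e m =>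
    if c (e + m) = e then coeff (e + m) g else 0
  have hq : ∀ e d, e ≤ d → coeff (d - e) (q e) = if c d = e then coeff d g else 0 := by
    intro e d hed
    change (if c (e + (d - e)) = e then _ else _) = _
    rw [add_tsub_cancel_of_le hed]
  have hdecomp : g = ∑ e ∈ S, monomial e 1 * q e := by
    ext d
    rw [map_sum]
    simp only [coeff_monomial_mul, one_mul]
    by_cases hd : k ≤ d.degree
    · obtain ⟨hcd, hcdeg⟩ := hc d hd
      rw [Finset.sum_eq_single (c d), if_pos hcd, hq _ _ hcd, if_pos rfl]
      · intro e _ he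
        split_ifs with hed
        · rw [hq _ _ hed, if_neg (Ne.symm he)]
        · rfl
      · intro h; simp [S, hcdeg] at h
    · rw [hg d (by omega)]
      refine (Finset.sum_eq_zero fun e _ => ?_).symm
      split_ifs with hed
      · rw [hq _ _ hed]; split_ifs <;> simp [hg d (by omega)]
      · rfl
  rw [hdecomp]
  exact Ideal.sum_mem _ fun e he => Ideal.mul_mem_right _ _ (hI e (by simpa [S] using he))

theorem MvPowerSeries.mem_of_monomial_mem {σ R : Type*} [CommRing R] [Finite σ]
    {I : Ideal (MvPowerSeries σ R)} {W : Submodule R (MvPowerSeries σ R)}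
    (hIW : I.restrictScalars R ≤ W) {k : ℕ}
    (hlow : ∀ d : σ →₀ ℕ, d.degree < k → monomial d (1 : R) ∈ W)
    (hI : ∀ e : σ →₀ ℕ, e.degree = k → monomial e (1 : R) ∈ I) (g : MvPowerSeries σ R) :
    g ∈ W := by
  classical
  let S := (Finsupp.finite_of_degree_lt (σ := σ) k).toFinset
  let T : MvPowerSeries σ R := ∑ d ∈ S, coeff d g • monomial d 1
  have hT : T ∈ W := W.sum_mem fun d hd => W.smul_mem _ (hlow d (by simpa [S] using hd))
  have hgT : g - T ∈ I := by
    refine mem_ideal_of_coeff_eq_zero hI fun d hd => ?_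
    simp [T, S, coeff_monomial, hd]
  simpa using W.add_mem (hIW hgT) hT

theorem Ideal.finrank_quotient_eq_of_dual {K A : Type*} [Field K] [CommRing A] [Algebra K A]
    {n : ℕ} (I : Ideal A) (b : Fin n → A) (φ : A →ₗ[K] Fin n → K) (hφI : ∀ g ∈ I, φ g = 0)
    (hφb : ∀ v, φ (∑ i, v i • b i) = v)
    (hspan : ∀ g, g ∈ I.restrictScalars K ⊔ Submodule.span K (Set.range b)) :
    Module.finrank K (A ⧸ I) = n := by
  have hker : LinearMap.ker φ = I.restrictScalars K := by
    ext g
    refine ⟨fun hg => ?_, hφI g⟩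
    obtain ⟨j, hj, s, hs, rfl⟩ := Submodule.mem_sup.mp (hspan g)
    obtain ⟨v, rfl⟩ := (Submodule.mem_span_range_iff_exists_fun K).mp hs
    have hv : v = 0 := by simpa [hφI j hj, hφb] using hg
    simpa [hv] using hj
  let e : (A ⧸ I) ≃ₗ[K] (Fin n → K) :=
    ((Submodule.Quotient.restrictScalarsEquiv K I).symm.trans
      (Submodule.quotEquivOfEq _ _ hker.symm)).trans
      (φ.quotKerEquivOfSurjective fun v => ⟨_, hφb v⟩)
  rw [e.finrank_eq, Module.finrank_fin_fun]

namespace Q10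

variable {K : Type} [Field K]

noncomputable def q10 (a : K) : MvPowerSeries (Fin 3) K :=
  X 0 ^ 3 + X 1 ^ 4 + X 1 * X 2 ^ 2 + C a * X 0 * X 1 ^ 3

noncomputable def expo (t : ℕ × ℕ × ℕ) : Fin 3 →₀ ℕ :=
  Finsupp.single 0 t.1 + Finsupp.single 1 t.2.1 + Finsupp.single 2 t.2.2

noncomputable def mono (t : ℕ × ℕ × ℕ) : MvPowerSeries (Fin 3) K :=
  X 0 ^ t.1 * X 1 ^ t.2.1 * X 2 ^ t.2.2

lemma mono_eq_monomial (t : ℕ × ℕ × ℕ) :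
    (mono t : MvPowerSeries (Fin 3) K) = monomial (expo t) 1 := by
  simp [mono, expo, X_pow_eq, monomial_mul_monomial]

@[simp] lemma expo_apply_zero (t : ℕ × ℕ × ℕ) : expo t 0 = t.1 := by simp [expo]
@[simp] lemma expo_apply_one (t : ℕ × ℕ × ℕ) : expo t 1 = t.2.1 := by simp [expo]
@[simp] lemma expo_apply_two (t : ℕ × ℕ × ℕ) : expo t 2 = t.2.2 := by simp [expo]

lemma expo_le_expo {s t : ℕ × ℕ × ℕ} : expo s ≤ expo t ↔ s ≤ t := by
  simp [Finsupp.le_def, Fin.forall_fin_succ, Prod.le_def]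

lemma eq_expo (d : Fin 3 →₀ ℕ) : d = expo (d 0, d 1, d 2) := by
  ext i; fin_cases i <;> simp

lemma expo_sub (s t : ℕ × ℕ × ℕ) : expo s - expo t = expo (s - t) := by
  ext i; fin_cases i <;> simp

lemma expo_injective : Function.Injective expo := by
  intro s t h
  have h0 := congr($h 0)
  have h1 := congr($h 1)
  have h2 := congr($h 2)
  simp only [expo_apply_zero, expo_apply_one, expo_apply_two] at h0 h1 h2
  exact Prod.ext h0 (Prod.ext h1 h2)

lemma coeff_expo_mono (s t : ℕ × ℕ × ℕ) :
    coeff (expo s) (mono t : MvPowerSeries (Fin 3) K) = if s = t then 1 else 0 := by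
  classical
  rw [mono_eq_monomial, coeff_monomial]
  simp [expo_injective.eq_iff]

lemma coeff_expo_mul_mono (r : MvPowerSeries (Fin 3) K) (s t : ℕ × ℕ × ℕ) :
    coeff (expo s) (r * mono t) = if t ≤ s then coeff (expo (s - t)) r else 0 := by
  rw [mono_eq_monomial, coeff_mul_monomial, mul_one, expo_sub]
  exact if_congr expo_le_expo rfl rfl

lemma mono_add (s t : ℕ × ℕ × ℕ) :
    (mono (s + t) : MvPowerSeries (Fin 3) K) = mono s * mono t := by
  simp only [mono, Prod.fst_add, Prod.snd_add, pow_add]; ring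

lemma mono_mem_of_le {I : Ideal (MvPowerSeries (Fin 3) K)} {s t : ℕ × ℕ × ℕ} (hs : mono s ∈ I)
    (hst : s ≤ t) : mono t ∈ I := by
  rw [← tsub_add_cancel_of_le hst, mono_add]
  exact I.mul_mem_left _ hs

lemma monomial_eq_mono (d : Fin 3 →₀ ℕ) : monomial d (1 : K) = mono (d 0, d 1, d 2) := by
  rw [mono_eq_monomial, ← eq_expo]

lemma degree_eq_add (d : Fin 3 →₀ ℕ) : d.degree = d 0 + d 1 + d 2 := by
  rw [Finsupp.degree_eq_sum, Fin.sum_univ_three]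

lemma pd_q10 (a : K) :
    pd 0 (q10 a) = 3 * X 0 ^ 2 + C a * X 1 ^ 3 ∧
    pd 1 (q10 a) = 4 * X 1 ^ 3 + 3 * C a * X 0 * X 1 ^ 2 + X 2 ^ 2 ∧
    pd 2 (q10 a) = 2 * X 1 * X 2 := by
  simp only [pd_eq_pderiv, q10, map_add, Derivation.leibniz, pderiv_pow, pderiv_C, pderiv_X_self,
    ne_eq, Fin.reduceEq, not_false_eq_true, pderiv_X_of_ne, smul_eq_mul]
  refine ⟨?_, ?_, ?_⟩ <;> push_cast <;> ring

def basisExp : Fin 10 → ℕ × ℕ × ℕ :=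
  ![(0,0,0), (1,0,0), (0,1,0), (0,0,1), (1,1,0), (0,2,0), (1,0,1), (0,3,0), (1,2,0), (1,3,0)]

/- Modulo `J`: `x² ≡ -(a/3)y³`, `z² ≡ -4y³ - 3axy²`, `x³ ≡ -(a/3)xy³`, `x²y ≡ (a²/4)xy³`,
`xz² ≡ -4xy³`, `y⁴ ≡ -(3a/4)xy³`, and the other monomials of degree `≤ 4` outside `basisExp` lie
in `J`. Entry `i` of `dual a g` is the coefficient of the `i`-th basis monomial in the resulting
normal form of `g`. -/
noncomputable def dual (a : K) : MvPowerSeries (Fin 3) K →ₗ[K] Fin 10 → K :=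
  LinearMap.pi ![coeff (expo (0,0,0)), coeff (expo (1,0,0)), coeff (expo (0,1,0)),
    coeff (expo (0,0,1)), coeff (expo (1,1,0)), coeff (expo (0,2,0)), coeff (expo (1,0,1)),
    coeff (expo (0,3,0)) - (a / 3) • coeff (expo (2,0,0)) - (4 : K) • coeff (expo (0,0,2)),
    coeff (expo (1,2,0)) - (3 * a) • coeff (expo (0,0,2)),
    coeff (expo (1,3,0)) - (4 : K) • coeff (expo (1,0,2)) - (a / 3) • coeff (expo (3,0,0))
      + (a ^ 2 / 4) • coeff (expo (2,1,0)) - (3 * a / 4) • coeff (expo (0,4,0))]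

lemma dual_mul_pd (a : K) (h2 : (2 : K) ≠ 0) (h3 : (3 : K) ≠ 0) (r : MvPowerSeries (Fin 3) K)
    (i : Fin 3) : dual a (r * pd i (q10 a)) = 0 := by
  have h4 : (4 : K) ≠ 0 := by simpa [show (4 : K) = 2 * 2 by norm_num] using mul_ne_zero h2 h2
  obtain ⟨e0, e1, e2⟩ := pd_q10 a
  have e0' : pd 0 (q10 a) = (3 : K) • mono (2,0,0) + a • mono (0,3,0) := by
    simp only [e0, mono, smul_eq_C_mul, map_ofNat]; ring
  have e1' : pd 1 (q10 a) = (4 : K) • mono (0,3,0) + (3 * a) • mono (1,2,0) + mono (0,0,2) := by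
    simp only [e1, mono, smul_eq_C_mul, map_ofNat, map_mul]; ring
  have e2' : pd 2 (q10 a) = (2 : K) • mono (0,1,1) := by
    simp only [e2, mono, smul_eq_C_mul, map_ofNat]; ring
  ext j
  fin_cases i <;> fin_cases j <;>
    simp [e0', e1', e2', dual, mul_add, coeff_expo_mul_mono] <;>
    field_simp <;> ring

section membership

variable (a : K)

local notation "𝔍" => jacobianIdeal (q10 a)

lemma pd0_mem : 3 * X 0 ^ 2 + C a * X 1 ^ 3 ∈ 𝔍 := (pd_q10 a).1 ▸ Ideal.subset_span ⟨0, rfl⟩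
lemma pd1_mem : 4 * X 1 ^ 3 + 3 * C a * X 0 * X 1 ^ 2 + X 2 ^ 2 ∈ 𝔍 :=
  (pd_q10 a).2.1 ▸ Ideal.subset_span ⟨1, rfl⟩
lemma pd2_mem : 2 * X 1 * X 2 ∈ 𝔍 := (pd_q10 a).2.2 ▸ Ideal.subset_span ⟨2, rfl⟩

lemma yz_mem (h2 : (2 : K) ≠ 0) : mono (0,1,1) ∈ 𝔍 := by
  refine Ideal.mem_of_algebraMap_mul_mem _ h2 ?_
  convert pd2_mem a using 1
  simp only [mono, map_ofNat]; ring

lemma z3_mem (h2 : (2 : K) ≠ 0) : mono (0,0,3) ∈ 𝔍 := by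
  convert sub_mem (Ideal.mul_mem_left _ (X 2) (pd1_mem a))
    (Ideal.mul_mem_left _ (4 * X 1 ^ 2 + 3 * C a * X 0 * X 1) (yz_mem a h2)) using 1
  simp only [mono]; ring

lemma y4_rel_mem : 8 * X 1 ^ 4 + 6 * C a * X 0 * X 1 ^ 3 ∈ 𝔍 := by
  convert sub_mem (Ideal.mul_mem_left _ (2 * X 1) (pd1_mem a))
    (Ideal.mul_mem_left _ (X 2) (pd2_mem a)) using 1
  ring

lemma y5_mem (h2 : (2 : K) ≠ 0) : mono (0,5,0) ∈ 𝔍 := by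
  have h32 : (32 : K) ≠ 0 := by simpa [show (32 : K) = 2 ^ 5 by norm_num] using pow_ne_zero 5 h2
  -- The one place where power series are needed: `32 + 6a³y` is not a unit in `K[x,y,z]`.
  have hu : IsUnit (32 + 6 * C a ^ 3 * X 1 : MvPowerSeries (Fin 3) K) := by
    rw [isUnit_iff_constantCoeff, map_add, map_mul, constantCoeff_X, mul_zero, add_zero]
    exact (map_ofNat (constantCoeff (σ := Fin 3) (R := K)) 32).symm ▸ h32.isUnit
  refine (Ideal.unit_mul_mem_iff_mem _ hu).mp ?_
  convert add_mem
    (sub_mem (Ideal.mul_mem_left _ (4 * X 1) (y4_rel_mem a))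
      (Ideal.mul_mem_left _ (3 * C a * X 0) (y4_rel_mem a)))
    (Ideal.mul_mem_left _ (6 * C a ^ 2 * X 1 ^ 3) (pd0_mem a)) using 1
  simp only [mono]; ring

lemma x2y3_mem (h2 : (2 : K) ≠ 0) (h3 : (3 : K) ≠ 0) : mono (2,3,0) ∈ 𝔍 := by
  refine Ideal.mem_of_algebraMap_mul_mem _ h3 ?_
  convert sub_mem (Ideal.mul_mem_left _ (X 1 ^ 3) (pd0_mem a))
    (Ideal.mul_mem_left _ (C a * X 1) (y5_mem a h2)) using 1
  simp only [mono, map_ofNat]; ring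

lemma xy4_mem (h2 : (2 : K) ≠ 0) (h3 : (3 : K) ≠ 0) : mono (1,4,0) ∈ 𝔍 := by
  have h8 : (8 : K) ≠ 0 := by simpa [show (8 : K) = 2 ^ 3 by norm_num] using pow_ne_zero 3 h2
  refine Ideal.mem_of_algebraMap_mul_mem _ h8 ?_
  convert sub_mem (Ideal.mul_mem_left _ (X 0) (y4_rel_mem a))
    (Ideal.mul_mem_left _ (6 * C a) (x2y3_mem a h2 h3)) using 1
  simp only [mono, map_ofNat]; ring

lemma x2y2_mem (h2 : (2 : K) ≠ 0) (h3 : (3 : K) ≠ 0) : mono (2,2,0) ∈ 𝔍 := by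
  refine Ideal.mem_of_algebraMap_mul_mem _ h3 ?_
  convert sub_mem (Ideal.mul_mem_left _ (X 1 ^ 2) (pd0_mem a))
    (Ideal.mul_mem_left _ (C a) (y5_mem a h2)) using 1
  simp only [mono, map_ofNat]; ring

lemma x3y_mem (h2 : (2 : K) ≠ 0) (h3 : (3 : K) ≠ 0) : mono (3,1,0) ∈ 𝔍 := by
  refine Ideal.mem_of_algebraMap_mul_mem _ h3 ?_
  convert sub_mem (Ideal.mul_mem_left _ (X 0 * X 1) (pd0_mem a))
    (Ideal.mul_mem_left _ (C a) (xy4_mem a h2 h3)) using 1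
  simp only [mono, map_ofNat]; ring

lemma x4_mem (h2 : (2 : K) ≠ 0) (h3 : (3 : K) ≠ 0) : mono (4,0,0) ∈ 𝔍 := by
  refine Ideal.mem_of_algebraMap_mul_mem _ h3 ?_
  convert sub_mem (Ideal.mul_mem_left _ (X 0 ^ 2) (pd0_mem a))
    (Ideal.mul_mem_left _ (C a) (x2y3_mem a h2 h3)) using 1
  simp only [mono, map_ofNat]; ring

lemma x2z_mem (h2 : (2 : K) ≠ 0) (h3 : (3 : K) ≠ 0) : mono (2,0,1) ∈ 𝔍 := by
  refine Ideal.mem_of_algebraMap_mul_mem _ h3 ?_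
  convert sub_mem (Ideal.mul_mem_left _ (X 2) (pd0_mem a))
    (Ideal.mul_mem_left _ (C a * X 1 ^ 2) (yz_mem a h2)) using 1
  simp only [mono, map_ofNat]; ring

def monoGens : List (ℕ × ℕ × ℕ) :=
  [(0,1,1), (0,0,3), (0,5,0), (2,3,0), (1,4,0), (2,2,0), (3,1,0), (4,0,0), (2,0,1)]

lemma mono_mem_of_gen (h2 : (2 : K) ≠ 0) (h3 : (3 : K) ≠ 0) {t : ℕ × ℕ × ℕ}
    (h : ∃ s ∈ monoGens, s ≤ t) : mono t ∈ 𝔍 := by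
  obtain ⟨s, hs, hst⟩ := h
  refine mono_mem_of_le ?_ hst
  simp only [monoGens, List.mem_cons, List.not_mem_nil, or_false] at hs
  rcases hs with rfl | rfl | rfl | rfl | rfl | rfl | rfl | rfl | rfl
  exacts [yz_mem a h2, z3_mem a h2, y5_mem a h2, x2y3_mem a h2 h3, xy4_mem a h2 h3,
    x2y2_mem a h2 h3, x3y_mem a h2 h3, x4_mem a h2 h3, x2z_mem a h2 h3]

lemma monomial_mem_of_degree_eq_five (h2 : (2 : K) ≠ 0) (h3 : (3 : K) ≠ 0) (d : Fin 3 →₀ ℕ)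
    (hd : d.degree = 5) : monomial d 1 ∈ 𝔍 := by
  rw [monomial_eq_mono]
  apply mono_mem_of_gen a h2 h3
  rw [degree_eq_add] at hd
  generalize d 0 = i, d 1 = j, d 2 = k at hd ⊢
  obtain rfl : k = 5 - i - j := by omega
  have hi : i ≤ 5 := by omega
  have hj : j ≤ 5 - i := by omega
  interval_cases i <;> interval_cases j <;> decide

local notation "𝔚" =>
  Submodule.restrictScalars K 𝔍 ⊔ Submodule.span K (Set.range fun i => mono (basisExp i))

lemma mem_W_of_mem {g : MvPowerSeries (Fin 3) K} (hg : g ∈ 𝔍) : g ∈ 𝔚 :=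
  Submodule.mem_sup_left hg

lemma C_mul_basis_mem_W (c : K) (i : Fin 10) : C c * mono (basisExp i) ∈ 𝔚 := by
  rw [← smul_eq_C_mul]
  exact Submodule.smul_mem _ _ (Submodule.mem_sup_right (Submodule.subset_span ⟨i, rfl⟩))

lemma x2_mem_W (h3 : (3 : K) ≠ 0) : mono (2,0,0) ∈ 𝔚 := by
  refine Submodule.mem_of_algebraMap_mul_mem _ h3 ?_
  convert sub_mem (mem_W_of_mem a (pd0_mem a)) (C_mul_basis_mem_W a a 7) using 1
  simp only [mono, basisExp, Matrix.cons_val, map_ofNat]; ring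

lemma z2_mem_W : mono (0,0,2) ∈ 𝔚 := by
  convert sub_mem (sub_mem (mem_W_of_mem a (pd1_mem a)) (C_mul_basis_mem_W a 4 7))
    (C_mul_basis_mem_W a (3 * a) 8) using 1
  simp only [mono, basisExp, Matrix.cons_val, map_ofNat, map_mul]; ring

lemma x3_mem_W (h3 : (3 : K) ≠ 0) : mono (3,0,0) ∈ 𝔚 := by
  refine Submodule.mem_of_algebraMap_mul_mem _ h3 ?_
  convert sub_mem (mem_W_of_mem a (Ideal.mul_mem_left _ (X 0) (pd0_mem a)))
    (C_mul_basis_mem_W a a 9) using 1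
  simp only [mono, basisExp, Matrix.cons_val, map_ofNat]; ring

lemma xz2_mem_W (h2 : (2 : K) ≠ 0) (h3 : (3 : K) ≠ 0) : mono (1,0,2) ∈ 𝔚 := by
  have := sub_mem (Ideal.mul_mem_left _ (X 0) (pd1_mem a))
    (Ideal.mul_mem_left _ (3 * C a) (x2y2_mem a h2 h3))
  convert sub_mem (mem_W_of_mem a this) (C_mul_basis_mem_W a 4 9) using 1
  simp only [mono, basisExp, Matrix.cons_val, map_ofNat]; ring

lemma y4_mem_W (h2 : (2 : K) ≠ 0) : mono (0,4,0) ∈ 𝔚 := by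
  have h8 : (8 : K) ≠ 0 := by simpa [show (8 : K) = 2 ^ 3 by norm_num] using pow_ne_zero 3 h2
  refine Submodule.mem_of_algebraMap_mul_mem _ h8 ?_
  convert sub_mem (mem_W_of_mem a (y4_rel_mem a)) (C_mul_basis_mem_W a (6 * a) 9) using 1
  simp only [mono, basisExp, Matrix.cons_val, map_ofNat, map_mul]; ring

lemma x2y_mem_W (h2 : (2 : K) ≠ 0) (h3 : (3 : K) ≠ 0) : mono (2,1,0) ∈ 𝔚 := by
  have h24 : (24 : K) ≠ 0 := by
    simpa [show (24 : K) = 2 ^ 3 * 3 by norm_num] using mul_ne_zero (pow_ne_zero 3 h2) h3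
  have := sub_mem (Ideal.mul_mem_left _ (8 * X 1) (pd0_mem a))
    (Ideal.mul_mem_left _ (C a) (y4_rel_mem a))
  refine Submodule.mem_of_algebraMap_mul_mem _ h24 ?_
  convert add_mem (mem_W_of_mem a this) (C_mul_basis_mem_W a (6 * a ^ 2) 9) using 1
  simp only [mono, basisExp, Matrix.cons_val, map_ofNat, map_mul, map_pow]; ring

lemma mono_mem_W (h2 : (2 : K) ≠ 0) (h3 : (3 : K) ≠ 0) {t : ℕ × ℕ × ℕ}
    (h : (∃ i, basisExp i = t) ∨ (∃ s ∈ monoGens, s ≤ t) ∨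
      t ∈ [(2,0,0), (0,0,2), (3,0,0), (1,0,2), (0,4,0), (2,1,0)]) : mono t ∈ 𝔚 := by
  rcases h with ⟨i, rfl⟩ | h | h
  · simpa using C_mul_basis_mem_W a 1 i
  · exact mem_W_of_mem a (mono_mem_of_gen a h2 h3 h)
  · simp only [List.mem_cons, List.not_mem_nil, or_false] at h
    rcases h with rfl | rfl | rfl | rfl | rfl | rfl
    exacts [x2_mem_W a h3, z2_mem_W a, x3_mem_W a h3, xz2_mem_W a h2 h3, y4_mem_W a h2,
      x2y_mem_W a h2 h3]

lemma monomial_mem_W_of_degree_lt (h2 : (2 : K) ≠ 0) (h3 : (3 : K) ≠ 0) (d : Fin 3 →₀ ℕ)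
    (hd : d.degree < 5) : monomial d 1 ∈ 𝔚 := by
  rw [monomial_eq_mono]
  apply mono_mem_W a h2 h3
  rw [degree_eq_add] at hd
  generalize d 0 = i, d 1 = j, d 2 = k at hd ⊢
  have hi : i ≤ 4 := by omega
  have hj : j ≤ 4 - i := by omega
  have hk : k ≤ 4 - i - j := by omega
  interval_cases i <;> interval_cases j <;> interval_cases k <;> decide

end membership

lemma dual_eq_zero_of_mem (a : K) (h2 : (2 : K) ≠ 0) (h3 : (3 : K) ≠ 0)
    {g : MvPowerSeries (Fin 3) K} (hg : g ∈ jacobianIdeal (q10 a)) : dual a g = 0 := by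
  obtain ⟨c, rfl⟩ := Ideal.mem_span_range_iff_exists_fun.mp hg
  simp [dual_mul_pd a h2 h3]

lemma dual_sum_basis (a : K) (v : Fin 10 → K) :
    dual a (∑ i, v i • mono (basisExp i)) = v := by
  ext j
  fin_cases j <;> simp [dual, basisExp, Fin.sum_univ_succ, coeff_expo_mono]

theorem milnor_q10 (a : K) (h2 : (2 : K) ≠ 0) (h3 : (3 : K) ≠ 0) : milnor K (q10 a) = 10 :=
  Ideal.finrank_quotient_eq_of_dual _ _ (dual a) (fun _ => dual_eq_zero_of_mem a h2 h3)
    (dual_sum_basis a)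
    (mem_of_monomial_mem le_sup_left (monomial_mem_W_of_degree_lt a h2 h3)
      (monomial_mem_of_degree_eq_five a h2 h3))

end Q10

theorem stmt16 (K : Type) [Field K] (p : ℕ) [CharP K p] (hp : 3 < p) (a : K) :
    milnor K (X (0 : Fin 3) ^ 3 + X 1 ^ 4 + X 1 * X 2 ^ 2
      + C (σ := Fin 3) (R := K) a * X 0 * X 1 ^ 3) = 10 := by
  have hchar : ∀ n : ℕ, 0 < n → n < p → (n : K) ≠ 0 := fun n hn hnp h =>
    absurd (Nat.le_of_dvd hn ((CharP.cast_eq_zero_iff K p n).mp h)) (by omega)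
  exact Q10.milnor_q10 a (by exact_mod_cast hchar 2 two_pos (by omega))
    (by exact_mod_cast hchar 3 three_pos hp)
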